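/- Let P(u,v) = (k₁·u^{β₁+β₂} + 2k₂·u^{β₁}·v^{β₂} + k₃·v^{β₁+β₂})^{δ/(β₁+β₂)} be a 2-input Kadiyala production function with parameters satisfying (★★), and assume additionally that k₁ > 0, k₂ > 0, k₃ > 0 and δ ≠ 1. Then the Gaussian curvature of the graph surface {(u,v,P(u,v)) : u>0, v>0} vanishes at every point of (0,∞)² if and only if β₁ = β₂ = 1 and k₁k₃ = k₂². -/

import Mathlib

open Real

/-- Partial derivative in the first variable. -/
noncomputable def pdu (f : ℝ → ℝ → ℝ) : ℝ → ℝ → ℝ := fun u v => deriv (fun x => f x v) u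

/-- Partial derivative in the second variable. -/
noncomputable def pdv (f : ℝ → ℝ → ℝ) : ℝ → ℝ → ℝ := fun u v => deriv (fun y => f u y) v

/-- Hessian determinant `f_uu · f_vv − f_uv²` of `f` at `(u, v)`. -/
noncomputable def hessDet (f : ℝ → ℝ → ℝ) (u v : ℝ) : ℝ :=
  pdu (pdu f) u v * pdv (pdv f) u v - pdv (pdu f) u v ^ 2

/-- Gaussian curvature of the graph surface `{(u, v, f u v)}` at `(u, v)`:
`K = (f_uu · f_vv − f_uv²) / (1 + f_u² + f_v²)²`. -/
noncomputable def gaussK (f : ℝ → ℝ → ℝ) (u v : ℝ) : ℝ :=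
  hessDet f u v / (1 + pdu f u v ^ 2 + pdv f u v ^ 2) ^ 2

/-- The 2-input Kadiyala production function
`P(u,v) = (k₁·u^(β₁+β₂) + 2k₂·u^β₁·v^β₂ + k₃·v^(β₁+β₂))^(δ/(β₁+β₂))`. -/
noncomputable def PKad (k₁ k₂ k₃ β₁ β₂ δ : ℝ) : ℝ → ℝ → ℝ := fun u v =>
  (k₁ * u ^ (β₁ + β₂) + 2 * k₂ * u ^ β₁ * v ^ β₂ + k₃ * v ^ (β₁ + β₂)) ^ (δ / (β₁ + β₂))

/-!
Write `P = G ^ α` with `G` the base of the Kadiyala function and `α = δ / (β₁ + β₂)`. The chain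
rule gives `det Hess P = α² G^(2α-3) (G · det Hess G + (α - 1) Q)`, where
`Q = G_uu G_v² - 2 G_uv G_u G_v + G_vv G_u²`, and for the Kadiyala base the bracket equals
`(δ - 1) G u^(β₁-2) v^(β₂-2) B(u, v)`, with `B` a combination of the monomials `u^(β₁+β₂)`,
`u^β₂ v^β₁`, `u^β₁ v^β₂`, `v^(β₁+β₂)`. Hence `K ≡ 0` exactly when `B ≡ 0`. On the line `u = 1` these
monomials are the powers `w^0, w^β₁, w^β₂, w^(β₁+β₂)`, linearly independent when the exponents are
distinct. Since the coefficient `-4 k₂² β₁ β₂` of `w^β₂` never vanishes, the exponents must collide,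
i.e. `β₁ = β₂`; then the constant coefficient forces `β₁ = 1` and the middle one `k₁ k₃ = k₂²`.
-/

open Real

-- At `w = exp j` the sums form the transposed Vandermonde system in the nodes `exp (p i)`.
theorem eq_zero_of_forall_sum_mul_rpow_eq_zero {n : ℕ} {c p : Fin n → ℝ}
    (hp : Function.Injective p) (h : ∀ w, 0 < w → ∑ i, c i * w ^ p i = 0) : c = 0 := by
  refine Matrix.eq_zero_of_vecMul_eq_zero
    (Matrix.det_vandermonde_ne_zero_iff.mpr (exp_injective.comp hp)) (funext fun j => ?_)
  simpa [Matrix.vecMul, dotProduct, Matrix.vandermonde, ← exp_mul, ← exp_nat_mul, mul_comm]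
    using h (exp j) (exp_pos _)

theorem HasDerivAt.const_mul_rpow_mul {f h : ℝ → ℝ} {f' h' x : ℝ} (p : ℝ)
    (hf : HasDerivAt f f' x) (hh : HasDerivAt h h' x) (hfx : 0 < f x) :
    HasDerivAt (fun t => p * f t ^ (p - 1) * h t)
      (p * ((p - 1) * f x ^ (p - 2) * f' * h x + f x ^ (p - 1) * h')) x := by
  have := ((hf.rpow_const (p := p - 1) (Or.inl hfx.ne')).const_mul p).mul hh
  rw [show p - 1 - 1 = p - 2 by ring] at this
  exact this.congr_deriv (by ring)

section

variable {U V : Set ℝ} {g gu gv guu guv gvv : ℝ → ℝ → ℝ} {u v : ℝ}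

theorem pdu_rpow (hgu : HasDerivAt (g · v) (gu u v) u) (hg : 0 < g u v) (p : ℝ) :
    pdu (fun x y => g x y ^ p) u v = p * g u v ^ (p - 1) * gu u v := by
  rw [pdu, (hgu.rpow_const (p := p) (Or.inl hg.ne')).deriv]
  ring

theorem pdv_rpow (hgv : HasDerivAt (g u ·) (gv u v) v) (hg : 0 < g u v) (p : ℝ) :
    pdv (fun x y => g x y ^ p) u v = p * g u v ^ (p - 1) * gv u v := by
  rw [pdv, (hgv.rpow_const (p := p) (Or.inl hg.ne')).deriv]
  ring

theorem hessDet_rpow (hU : IsOpen U) (hV : IsOpen V) (hg : ∀ x ∈ U, ∀ y ∈ V, 0 < g x y)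
    (hgu : ∀ x ∈ U, ∀ y ∈ V, HasDerivAt (g · y) (gu x y) x)
    (hgv : ∀ x ∈ U, ∀ y ∈ V, HasDerivAt (g x ·) (gv x y) y)
    (hguu : ∀ x ∈ U, ∀ y ∈ V, HasDerivAt (gu · y) (guu x y) x)
    (hguv : ∀ x ∈ U, ∀ y ∈ V, HasDerivAt (gu x ·) (guv x y) y)
    (hgvv : ∀ x ∈ U, ∀ y ∈ V, HasDerivAt (gv x ·) (gvv x y) y)
    (p : ℝ) (hu : u ∈ U) (hv : v ∈ V) :
    hessDet (fun x y => g x y ^ p) u v =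
      p ^ 2 * (g u v ^ (p - 2)) ^ 2 * g u v *
        (g u v * (guu u v * gvv u v - guv u v ^ 2) + (p - 1) *
          (guu u v * gv u v ^ 2 - 2 * guv u v * gu u v * gv u v + gvv u v * gu u v ^ 2)) := by
  have huu : pdu (pdu fun x y => g x y ^ p) u v =
      p * ((p - 1) * g u v ^ (p - 2) * gu u v * gu u v + g u v ^ (p - 1) * guu u v) := by
    have hev : (pdu (fun x y => g x y ^ p) · v) =ᶠ[nhds u] fun x => p * g x v ^ (p - 1) * gu x v :=
      Filter.eventually_of_mem (hU.mem_nhds hu) fun x hx => pdu_rpow (hgu x hx v hv) (hg x hx v hv) p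
    rw [pdu, hev.deriv_eq,
      ((hgu u hu v hv).const_mul_rpow_mul p (hguu u hu v hv) (hg u hu v hv)).deriv]
  have huv : pdv (pdu fun x y => g x y ^ p) u v =
      p * ((p - 1) * g u v ^ (p - 2) * gv u v * gu u v + g u v ^ (p - 1) * guv u v) := by
    have hev : (pdu (fun x y => g x y ^ p) u ·) =ᶠ[nhds v] fun y => p * g u y ^ (p - 1) * gu u y :=
      Filter.eventually_of_mem (hV.mem_nhds hv) fun y hy => pdu_rpow (hgu u hu y hy) (hg u hu y hy) p
    rw [pdv, hev.deriv_eq,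
      ((hgv u hu v hv).const_mul_rpow_mul p (hguv u hu v hv) (hg u hu v hv)).deriv]
  have hvv : pdv (pdv fun x y => g x y ^ p) u v =
      p * ((p - 1) * g u v ^ (p - 2) * gv u v * gv u v + g u v ^ (p - 1) * gvv u v) := by
    have hev : (pdv (fun x y => g x y ^ p) u ·) =ᶠ[nhds v] fun y => p * g u y ^ (p - 1) * gv u y :=
      Filter.eventually_of_mem (hV.mem_nhds hv) fun y hy => pdv_rpow (hgv u hu y hy) (hg u hu y hy) p
    rw [pdv, hev.deriv_eq,
      ((hgv u hu v hv).const_mul_rpow_mul p (hgvv u hu v hv) (hg u hu v hv)).deriv]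
  have hpow : g u v ^ (p - 1) = g u v ^ (p - 2) * g u v := by
    rw [← rpow_add_one (hg u hu v hv).ne']
    ring_nf
  rw [hessDet, huu, huv, hvv, hpow]
  ring

end

theorem gaussK_eq_zero_iff {f : ℝ → ℝ → ℝ} {u v : ℝ} : gaussK f u v = 0 ↔ hessDet f u v = 0 := by
  have : (1 + pdu f u v ^ 2 + pdv f u v ^ 2) ^ 2 ≠ 0 := by positivity
  rw [gaussK, div_eq_zero_iff, or_iff_left this]

section Kadiyala

variable (k₁ k₂ k₃ β₁ β₂ : ℝ)

noncomputable def kadBase (u v : ℝ) : ℝ :=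
  k₁ * u ^ (β₁ + β₂) + 2 * k₂ * u ^ β₁ * v ^ β₂ + k₃ * v ^ (β₁ + β₂)

noncomputable def kadBaseU (u v : ℝ) : ℝ :=
  k₁ * ((β₁ + β₂) * u ^ (β₁ + β₂ - 1)) + 2 * k₂ * (β₁ * u ^ (β₁ - 1)) * v ^ β₂

noncomputable def kadBaseV (u v : ℝ) : ℝ :=
  2 * k₂ * u ^ β₁ * (β₂ * v ^ (β₂ - 1)) + k₃ * ((β₁ + β₂) * v ^ (β₁ + β₂ - 1))

noncomputable def kadBaseUU (u v : ℝ) : ℝ :=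
  k₁ * ((β₁ + β₂) * ((β₁ + β₂ - 1) * u ^ (β₁ + β₂ - 2))) +
    2 * k₂ * (β₁ * ((β₁ - 1) * u ^ (β₁ - 2))) * v ^ β₂

noncomputable def kadBaseUV (u v : ℝ) : ℝ :=
  2 * k₂ * (β₁ * u ^ (β₁ - 1)) * (β₂ * v ^ (β₂ - 1))

noncomputable def kadBaseVV (u v : ℝ) : ℝ :=
  2 * k₂ * u ^ β₁ * (β₂ * ((β₂ - 1) * v ^ (β₂ - 2))) +
    k₃ * ((β₁ + β₂) * ((β₁ + β₂ - 1) * v ^ (β₁ + β₂ - 2)))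

noncomputable def kadBracket (u v : ℝ) : ℝ :=
  2 * (β₁ + β₂) * k₁ * k₂ * β₂ * (β₂ - 1) * u ^ (β₁ + β₂)
    + k₁ * k₃ * (β₁ + β₂) ^ 2 * (β₁ + β₂ - 1) * (u ^ β₂ * v ^ β₁)
    - 4 * k₂ ^ 2 * β₁ * β₂ * (u ^ β₁ * v ^ β₂)
    + 2 * (β₁ + β₂) * k₂ * k₃ * β₁ * (β₁ - 1) * v ^ (β₁ + β₂)

variable {k₁ k₂ k₃ β₁ β₂}

theorem PKad_eq_kadBase_rpow (δ : ℝ) :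
    PKad k₁ k₂ k₃ β₁ β₂ δ = fun u v => kadBase k₁ k₂ k₃ β₁ β₂ u v ^ (δ / (β₁ + β₂)) := rfl

theorem kadBase_pos (hk₁ : 0 < k₁) (hk₂ : 0 ≤ k₂) (hk₃ : 0 ≤ k₃) {u v : ℝ} (hu : 0 < u)
    (hv : 0 < v) : 0 < kadBase k₁ k₂ k₃ β₁ β₂ u v := by
  unfold kadBase
  positivity

theorem hasDerivAt_rpow_sub_one {x : ℝ} (hx : 0 < x) (p : ℝ) :
    HasDerivAt (fun t => t ^ (p - 1)) ((p - 1) * x ^ (p - 2)) x := by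
  have := hasDerivAt_rpow_const (p := p - 1) (Or.inl hx.ne')
  rwa [show p - 1 - 1 = p - 2 by ring] at this

variable {u v : ℝ}

theorem hasDerivAt_kadBase_u (hu : 0 < u) :
    HasDerivAt (kadBase k₁ k₂ k₃ β₁ β₂ · v) (kadBaseU k₁ k₂ β₁ β₂ u v) u := by
  have h₁ := (hasDerivAt_rpow_const (p := β₁ + β₂) (Or.inl hu.ne')).const_mul k₁
  have h₂ := ((hasDerivAt_rpow_const (p := β₁) (Or.inl hu.ne')).const_mul (2 * k₂)).mul_const
    (v ^ β₂)
  unfold kadBase kadBaseU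
  exact ((h₁.add h₂).add_const (k₃ * v ^ (β₁ + β₂))).congr_deriv (by ring)

theorem hasDerivAt_kadBase_v (hv : 0 < v) :
    HasDerivAt (kadBase k₁ k₂ k₃ β₁ β₂ u ·) (kadBaseV k₂ k₃ β₁ β₂ u v) v := by
  have h₁ := (hasDerivAt_rpow_const (p := β₂) (Or.inl hv.ne')).const_mul (2 * k₂ * u ^ β₁)
  have h₂ := (hasDerivAt_rpow_const (p := β₁ + β₂) (Or.inl hv.ne')).const_mul k₃
  unfold kadBase kadBaseV
  exact (h₁.const_add (k₁ * u ^ (β₁ + β₂))).add h₂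

theorem hasDerivAt_kadBaseU_u (hu : 0 < u) :
    HasDerivAt (kadBaseU k₁ k₂ β₁ β₂ · v) (kadBaseUU k₁ k₂ β₁ β₂ u v) u := by
  have h₁ := ((hasDerivAt_rpow_sub_one hu (β₁ + β₂)).const_mul (β₁ + β₂)).const_mul k₁
  have h₂ := (((hasDerivAt_rpow_sub_one hu β₁).const_mul β₁).const_mul (2 * k₂)).mul_const
    (v ^ β₂)
  exact h₁.add h₂

theorem hasDerivAt_kadBaseU_v (hv : 0 < v) :
    HasDerivAt (kadBaseU k₁ k₂ β₁ β₂ u ·) (kadBaseUV k₂ β₁ β₂ u v) v :=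
  ((hasDerivAt_rpow_const (p := β₂) (Or.inl hv.ne')).const_mul
    (2 * k₂ * (β₁ * u ^ (β₁ - 1)))).const_add _

theorem hasDerivAt_kadBaseV_v (hv : 0 < v) :
    HasDerivAt (kadBaseV k₂ k₃ β₁ β₂ u ·) (kadBaseVV k₂ k₃ β₁ β₂ u v) v := by
  have h₁ := ((hasDerivAt_rpow_sub_one hv β₂).const_mul β₂).const_mul (2 * k₂ * u ^ β₁)
  have h₂ := ((hasDerivAt_rpow_sub_one hv (β₁ + β₂)).const_mul (β₁ + β₂)).const_mul k₃
  exact h₁.add h₂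

theorem kadBase_hessian_identity (hu : 0 < u) (hv : 0 < v) (α : ℝ) :
    kadBase k₁ k₂ k₃ β₁ β₂ u v * (kadBaseUU k₁ k₂ β₁ β₂ u v * kadBaseVV k₂ k₃ β₁ β₂ u v
        - kadBaseUV k₂ β₁ β₂ u v ^ 2) +
      (α - 1) * (kadBaseUU k₁ k₂ β₁ β₂ u v * kadBaseV k₂ k₃ β₁ β₂ u v ^ 2
        - 2 * kadBaseUV k₂ β₁ β₂ u v * kadBaseU k₁ k₂ β₁ β₂ u v
          * kadBaseV k₂ k₃ β₁ β₂ u v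
        + kadBaseVV k₂ k₃ β₁ β₂ u v * kadBaseU k₁ k₂ β₁ β₂ u v ^ 2) =
    (α * (β₁ + β₂) - 1) * kadBase k₁ k₂ k₃ β₁ β₂ u v * (u ^ (β₁ - 2) * v ^ (β₂ - 2)) *
      kadBracket k₁ k₂ k₃ β₁ β₂ u v := by
  unfold kadBase kadBaseU kadBaseV kadBaseUU kadBaseUV kadBaseVV kadBracket
  simp only [rpow_sub hu, rpow_sub hv, rpow_add hu, rpow_add hv, rpow_one, rpow_two]
  field_simp
  ring

theorem hessDet_PKad_eq_zero_iff {δ : ℝ} (hk₁ : 0 < k₁) (hk₂ : 0 ≤ k₂) (hk₃ : 0 ≤ k₃)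
    (hs : β₁ + β₂ ≠ 0) (hδ₀ : δ ≠ 0) (hδ₁ : δ ≠ 1) (hu : 0 < u) (hv : 0 < v) :
    hessDet (PKad k₁ k₂ k₃ β₁ β₂ δ) u v = 0 ↔ kadBracket k₁ k₂ k₃ β₁ β₂ u v = 0 := by
  have hG := kadBase_pos (β₁ := β₁) (β₂ := β₂) hk₁ hk₂ hk₃ hu hv
  rw [PKad_eq_kadBase_rpow, hessDet_rpow isOpen_Ioi isOpen_Ioi
    (fun x hx y hy => kadBase_pos hk₁ hk₂ hk₃ hx hy) (fun x hx _ _ => hasDerivAt_kadBase_u hx)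
    (fun _ _ y hy => hasDerivAt_kadBase_v hy) (fun x hx _ _ => hasDerivAt_kadBaseU_u hx)
    (fun _ _ y hy => hasDerivAt_kadBaseU_v hy) (fun _ _ y hy => hasDerivAt_kadBaseV_v hy)
    _ (Set.mem_Ioi.2 hu) (Set.mem_Ioi.2 hv), kadBase_hessian_identity hu hv,
    div_mul_cancel₀ δ hs]
  simp [div_ne_zero hδ₀ hs, hG.ne', sub_ne_zero.2 hδ₁, (rpow_pos_of_pos hG _).ne',
    (rpow_pos_of_pos hu _).ne', (rpow_pos_of_pos hv _).ne']

theorem kadBracket_one_one (hk : k₁ * k₃ = k₂ ^ 2) (u v : ℝ) :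
    kadBracket k₁ k₂ k₃ 1 1 u v = 0 := by
  simp only [kadBracket, rpow_one]
  linear_combination 4 * (u * v) * hk

theorem eq_of_forall_kadBracket_one_eq_zero (hk₂ : k₂ ≠ 0) (hβ₁ : β₁ ≠ 0) (hβ₂ : β₂ ≠ 0)
    (hs : β₁ + β₂ ≠ 0) (h : ∀ w, 0 < w → kadBracket k₁ k₂ k₃ β₁ β₂ 1 w = 0) : β₁ = β₂ := by
  by_contra hne
  have hp : Function.Injective ![0, β₁, β₂, β₁ + β₂] := by
    intro i j hij
    fin_cases i <;> fin_cases j <;> simp at hij ⊢ <;> grind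
  have hc := eq_zero_of_forall_sum_mul_rpow_eq_zero hp
    (c := ![2 * (β₁ + β₂) * k₁ * k₂ * β₂ * (β₂ - 1),
      k₁ * k₃ * (β₁ + β₂) ^ 2 * (β₁ + β₂ - 1), -(4 * k₂ ^ 2 * β₁ * β₂),
      2 * (β₁ + β₂) * k₂ * k₃ * β₁ * (β₁ - 1)])
    fun w hw => by
      have := h w hw
      simp only [kadBracket, one_rpow, one_mul] at this
      simp [Fin.sum_univ_four]
      linear_combination this
  simpa [hk₂, hβ₁, hβ₂] using congrFun hc 2

theorem eq_one_of_forall_kadBracket_one_eq_zero (hk₁ : k₁ ≠ 0) (hk₂ : k₂ ≠ 0) (hβ : β₁ ≠ 0)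
    (h : ∀ w, 0 < w → kadBracket k₁ k₂ k₃ β₁ β₁ 1 w = 0) : β₁ = 1 ∧ k₁ * k₃ = k₂ ^ 2 := by
  have hp : Function.Injective ![0, β₁, β₁ + β₁] := by
    intro i j hij
    fin_cases i <;> fin_cases j <;> simp at hij ⊢ <;> grind
  have hc := eq_zero_of_forall_sum_mul_rpow_eq_zero hp
    (c := ![2 * (β₁ + β₁) * k₁ * k₂ * β₁ * (β₁ - 1),
      k₁ * k₃ * (β₁ + β₁) ^ 2 * (β₁ + β₁ - 1) - 4 * k₂ ^ 2 * β₁ * β₁,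
      2 * (β₁ + β₁) * k₂ * k₃ * β₁ * (β₁ - 1)])
    fun w hw => by
      have := h w hw
      simp only [kadBracket, one_rpow, one_mul] at this
      simp [Fin.sum_univ_three]
      linear_combination this
  obtain rfl : β₁ = 1 := by simpa [hk₁, hk₂, hβ, sub_eq_zero] using congrFun hc 0
  have h₁ := congrFun hc 1
  simp only [Matrix.cons_val_one, Matrix.cons_val_zero, Pi.zero_apply] at h₁
  exact ⟨rfl, by linear_combination h₁ / 4⟩

end Kadiyala

theorem kadiyala_all_positive_developable_iff_general
    (k₁ k₂ k₃ β₁ β₂ δ : ℝ)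
    (hβ₁ : 0 < β₁ * (β₁ + β₂)) (hβ₂ : 0 < β₂ * (β₁ + β₂)) (hδ : 0 < δ) (hk₁' : 0 < k₁) (hk₂' : 0 < k₂) (hk₃' : 0 < k₃) (hδ1 : δ ≠ 1) :
    (∀ u v : ℝ, 0 < u → 0 < v → gaussK (PKad k₁ k₂ k₃ β₁ β₂ δ) u v = 0) ↔
      (β₁ = 1 ∧ β₂ = 1 ∧ k₁ * k₃ = k₂ ^ 2) := by
  have hs : β₁ + β₂ ≠ 0 := right_ne_zero_of_mul hβ₁.ne'
  have hβ₁₀ : β₁ ≠ 0 := left_ne_zero_of_mul hβ₁.ne'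
  have hβ₂₀ : β₂ ≠ 0 := left_ne_zero_of_mul hβ₂.ne'
  have key : ∀ u v, 0 < u → 0 < v →
      (gaussK (PKad k₁ k₂ k₃ β₁ β₂ δ) u v = 0 ↔ kadBracket k₁ k₂ k₃ β₁ β₂ u v = 0) :=
    fun u v hu hv => gaussK_eq_zero_iff.trans
      (hessDet_PKad_eq_zero_iff hk₁' hk₂'.le hk₃'.le hs hδ.ne' hδ1 hu hv)
  constructor
  · intro h
    have hB : ∀ w, 0 < w → kadBracket k₁ k₂ k₃ β₁ β₂ 1 w = 0 :=
      fun w hw => (key 1 w one_pos hw).1 (h 1 w one_pos hw)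
    obtain rfl := eq_of_forall_kadBracket_one_eq_zero hk₂'.ne' hβ₁₀ hβ₂₀ hs hB
    obtain ⟨rfl, hk⟩ := eq_one_of_forall_kadBracket_one_eq_zero hk₁'.ne' hk₂'.ne' hβ₁₀ hB
    exact ⟨rfl, rfl, hk⟩
  · rintro ⟨rfl, rfl, hk⟩ u v hu hv
    exact (key u v hu hv).2 (kadBracket_one_one hk u v)

/-- If `k₁, k₂, k₃ > 0` and `δ ≠ 1`, the Kadiyala surface is developable (its Gaussian
curvature vanishes at every point of `(0,∞)²`) if and only if `β₁ = β₂ = 1` and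
`k₁k₃ = k₂²`. -/
theorem kadiyala_all_positive_developable_iff
    (k₁ k₂ k₃ β₁ β₂ δ : ℝ)
    (hsum : k₁ + 2 * k₂ + k₃ = 1) (hk₁ : 0 ≤ k₁) (hk₂ : 0 ≤ k₂) (hk₃ : 0 ≤ k₃)
    (h12 : ¬(k₁ = 0 ∧ k₂ = 0)) (h23 : ¬(k₂ = 0 ∧ k₃ = 0))
    (hβ₁ : 0 < β₁ * (β₁ + β₂)) (hβ₂ : 0 < β₂ * (β₁ + β₂)) (hδ : 0 < δ) (hk₁' : 0 < k₁) (hk₂' : 0 < k₂) (hk₃' : 0 < k₃) (hδ1 : δ ≠ 1) :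
    (∀ u v : ℝ, 0 < u → 0 < v → gaussK (PKad k₁ k₂ k₃ β₁ β₂ δ) u v = 0) ↔
      (β₁ = 1 ∧ β₂ = 1 ∧ k₁ * k₃ = k₂ ^ 2) :=
  kadiyala_all_positive_developable_iff_general k₁ k₂ k₃ β₁ β₂ δ hβ₁ hβ₂ hδ hk₁' hk₂' hk₃' hδ1
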